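/- The number of binary words of length n ≥ 2 whose Chen-Fox-Lyndon decomposition is strictly decreasing (no Lyndon factor repeated) equals 2^{n-1}. -/

import Mathlib

/-- A Lyndon word: a nonempty word strictly lexicographically smaller than
all of its nontrivial cyclic rotations. -/
def IsLyndon {α : Type*} [LinearOrder α] (w : List α) : Prop :=
  w ≠ [] ∧ ∀ i, 0 < i → i < w.length → w < w.rotate i

/-- A word has a strictly decreasing Lyndon decomposition if it is the
concatenation of a strictly decreasing (left to right) sequence of Lyndon words. -/
def HasStrictDecrLyndonDecomp {α : Type*} [LinearOrder α] (w : List α) : Prop :=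
  ∃ L : List (List α),
    w = L.flatten ∧ (∀ l ∈ L, IsLyndon l) ∧ L.Chain' (fun a b => b < a)

open List

variable {α : Type*} [LinearOrder α]

theorem not_lt_nil' (u : List α) : ¬ u < [] := fun h => List.not_lt_nil _ h

theorem cons_prefix_cons' {a b : α} {l₁ l₂ : List α} (h : l₁ <+: l₂) (hab : a = b) :
    a :: l₁ <+: b :: l₂ := by
  subst hab; obtain ⟨t, rfl⟩ := h; exact ⟨t, rfl⟩

/-- A1 -/
theorem lt_append_of_ne_nil (p : List α) {t : List α} (ht : t ≠ []) : p < p ++ t := by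
  induction p with
  | nil =>
    cases t with
    | nil => exact absurd rfl ht
    | cons b t' => exact List.nil_lt_cons b t'
  | cons a p ih => exact List.Lex.cons ih

/-- A2 -/
theorem IsPrefix.le' {p w : List α} (h : p <+: w) : p ≤ w := by
  obtain ⟨t, rfl⟩ := h
  rcases eq_or_ne t [] with rfl | ht
  · simp
  · exact le_of_lt (lt_append_of_ne_nil p ht)

theorem lt_of_prefix_ne {p w : List α} (h : p <+: w) (hne : p ≠ w) : p < w := by
  obtain ⟨t, rfl⟩ := h
  rcases eq_or_ne t [] with rfl | ht
  · simp at hne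
  · exact lt_append_of_ne_nil p ht

/-- A3 -/
theorem append_lt_append_left_iff {p u v : List α} : p ++ u < p ++ v ↔ u < v := by
  constructor
  · intro h
    induction p with
    | nil => exact h
    | cons a p ih => exact ih ((List.cons_lt_cons_self).mp h)
  · intro h
    exact List.Lex.append_left _ h p

/-- A5 -/
theorem append_lt_append_of_lt_of_length_eq :
    ∀ {p q : List α}, p < q → p.length = q.length → ∀ (u v : List α), p ++ u < q ++ v := by
  intro p
  induction p with
  | nil =>
    intro q h hl
    cases q with
    | nil => exact absurd h (lt_irrefl _)
    | cons b q' => simp at hl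
  | cons a p ih =>
    intro q h hl u v
    cases q with
    | nil => exact absurd h (not_lt_nil' _)
    | cons b q' =>
      cases h with
      | cons h => exact List.Lex.cons (ih h (by simpa using hl) u v)
      | rel h => exact List.Lex.rel h

/-- A6 -/
theorem lt_or_eq_of_append_lt_of_length_eq :
    ∀ {p q u v : List α}, p ++ u < q ++ v → p.length = q.length → p < q ∨ p = q := by
  intro p
  induction p with
  | nil =>
    intro q u v h hl
    cases q with
    | nil => exact Or.inr rfl
    | cons b q' => simp at hl
  | cons a p ih =>
    intro q u v h hl
    cases q with
    | nil => simp at hl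
    | cons b q' =>
      cases h with
      | cons h =>
        rcases ih h (by simpa using hl) with h' | h'
        · exact Or.inl (List.Lex.cons h')
        · exact Or.inr (by rw [h'])
      | rel h => exact Or.inl (List.Lex.rel h)

/-- A7 -/
theorem lt_append_or_prefix {u v : List α} (h : u < v) (t : List α) :
    u < v ++ t ∨ v <+: u := by
  induction v generalizing u with
  | nil => exact absurd h (not_lt_nil' _)
  | cons b v' ih =>
    cases u with
    | nil => exact Or.inl (List.nil_lt_cons _ _)
    | cons a u' =>
      cases h with
      | cons h =>
        rcases ih h with h' | h'
        · exact Or.inl (List.Lex.cons h')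
        · exact Or.inr (cons_prefix_cons' h' rfl)
      | rel h => exact Or.inl (List.Lex.rel h)

/-- A8 -/
theorem lt_of_lt_append {u v t : List α} (h : u < v ++ t) : u < v ∨ v <+: u := by
  induction v generalizing u with
  | nil => exact Or.inr (List.nil_prefix)
  | cons b v' ih =>
    cases u with
    | nil => exact Or.inl (List.nil_lt_cons _ _)
    | cons a u' =>
      cases h with
      | cons h =>
        rcases ih h with h' | h'
        · exact Or.inl (List.Lex.cons h')
        · exact Or.inr (cons_prefix_cons' h' rfl)
      | rel h => exact Or.inl (List.Lex.rel h)

/-- A11 -/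
theorem append_lt_append_of_lt {u z : List α} (h : u < z) (h1 : ¬ z <+: u) (h2 : ¬ u <+: z) :
    ∀ (t t' : List α), u ++ t < z ++ t' := by
  induction z generalizing u with
  | nil => exact absurd h (not_lt_nil' _)
  | cons b z' ih =>
    cases u with
    | nil => exact absurd (List.nil_prefix) h2
    | cons a u' =>
      intro t t'
      cases h with
      | cons h =>
        refine List.Lex.cons (ih h ?_ ?_ t t')
        · intro hp; exact h1 (cons_prefix_cons' hp rfl)
        · intro hp; exact h2 (cons_prefix_cons' hp rfl)
      | rel h => exact List.Lex.rel h

/-- Suffix characterization -/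
def IsLyndon' {α : Type*} [LinearOrder α] (w : List α) : Prop :=
  w ≠ [] ∧ ∀ p s : List α, w = p ++ s → p ≠ [] → s ≠ [] → w < s

theorem isLyndon_iff_isLyndon' (w : List α) : IsLyndon w ↔ IsLyndon' w := by
  constructor
  · rintro ⟨hne, hrot⟩
    refine ⟨hne, ?_⟩
    rintro p s rfl hp hs
    have hlp : 0 < p.length := List.length_pos_iff.mpr hp
    have hls : 0 < s.length := List.length_pos_iff.mpr hs
    have hi : p.length < (p ++ s).length := by simp; omega
    have hrot' := hrot p.length hlp hi
    rw [List.rotate_eq_drop_append_take (le_of_lt hi)] at hrot'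
    rw [List.drop_left, List.take_left] at hrot'
    rcases lt_of_lt_append hrot' with h | h
    · exact h
    · exfalso
      obtain ⟨q, hq⟩ := h
      have hlq : q.length = p.length := by
        have := congrArg List.length hq; simp at this; omega
      have hsl : s.length < (p ++ s).length := by simp; omega
      have hrot2 := hrot s.length hls hsl
      rw [List.rotate_eq_drop_append_take (le_of_lt hsl)] at hrot2
      rw [← hq] at hrot2 hrot'
      rw [List.drop_left, List.take_left] at hrot2
      have h1 : q < p := append_lt_append_left_iff.mp hrot'
      rw [hq] at hrot2
      rcases lt_or_eq_of_append_lt_of_length_eq hrot2 hlq.symm with h2 | h2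
      · exact absurd h1 (asymm h2)
      · subst h2
        rw [hq] at hrot'
        exact lt_irrefl _ hrot'
  · rintro ⟨hne, hsuf⟩
    refine ⟨hne, ?_⟩
    intro i hi hiw
    rw [List.rotate_eq_drop_append_take (le_of_lt hiw)]
    have hw : w = w.take i ++ w.drop i := (List.take_append_drop i w).symm
    have hdne : w.drop i ≠ [] := by
      intro h; have := congrArg List.length h; simp at this; omega
    have htne : w.take i ≠ [] := by
      have hh : 0 < (w.take i).length := by rw [List.length_take]; omega
      exact List.length_pos_iff.mp hh
    have hlt : w < w.drop i := hsuf _ _ hw htne hdne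
    rcases lt_append_or_prefix hlt (w.take i) with h | h
    · exact h
    · exfalso
      have hne2 : w.drop i ≠ w := by
        intro h'; have := congrArg List.length h'; simp at this; omega
      exact absurd (lt_of_prefix_ne h hne2) (asymm hlt)

theorem not_prefix_of_lt_of_length_le {u z : List α} (h : u < z) (hl : z.length ≤ u.length) :
    ¬ z <+: u ∧ ¬ u <+: z := by
  constructor
  · intro hp
    exact absurd (IsPrefix.le' hp) (not_le_of_gt h)
  · intro hp
    have : u = z := List.IsPrefix.eq_of_length_le hp hl
    subst this; exact lt_irrefl _ h

/-- merge lemma -/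
theorem IsLyndon'.append {u v : List α} (hu : IsLyndon' u) (hv : IsLyndon' v) (huv : u < v) :
    IsLyndon' (u ++ v) := by
  obtain ⟨hune, hus⟩ := hu
  obtain ⟨hvne, hvs⟩ := hv
  have huv_lt_v : u ++ v < v := by
    by_cases hp : u <+: v
    · obtain ⟨v₂, rfl⟩ := hp
      have hv₂ : v₂ ≠ [] := by
        rintro rfl; rw [List.append_nil] at huv; exact lt_irrefl _ huv
      exact append_lt_append_left_iff.mpr (hvs u v₂ rfl hune hv₂)
    · have hp2 : ¬ v <+: u := fun hpp => absurd (IsPrefix.le' hpp) (not_le_of_gt huv)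
      have := append_lt_append_of_lt huv hp2 hp v []
      rwa [List.append_nil] at this
  refine ⟨by simp [hune], ?_⟩
  intro p s heq hpne hsne
  rcases lt_trichotomy p.length u.length with hl | hl | hl
  · -- p proper prefix of u
    have hpu : p <+: u := by
      have h1 : p <+: u ++ v := ⟨s, heq.symm⟩
      exact List.prefix_of_prefix_length_le h1 (u.prefix_append v) (le_of_lt hl)
    obtain ⟨u₂, rfl⟩ := hpu
    have hu₂ : u₂ ≠ [] := by
      rintro rfl; simp at hl
    have hs : s = u₂ ++ v := by
      have : p ++ (u₂ ++ v) = p ++ s := by rw [← List.append_assoc]; exact heq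
      exact (List.append_cancel_left this).symm
    have hlt : p ++ u₂ < u₂ := hus p u₂ rfl hpne hu₂
    have hnp := not_prefix_of_lt_of_length_le hlt (by simp)
    have := append_lt_append_of_lt hlt hnp.1 hnp.2 v v
    rw [hs, List.append_assoc] at *
    exact this
  · -- p = u, s = v
    obtain ⟨rfl, rfl⟩ := List.append_inj heq.symm (by omega)
    exact huv_lt_v
  · -- s proper suffix of v
    have hup : u <+: p := by
      have h1 : p <+: u ++ v := ⟨s, heq.symm⟩
      exact List.prefix_of_prefix_length_le (u.prefix_append v) h1 (le_of_lt hl)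
    obtain ⟨v₁, rfl⟩ := hup
    have hv₁ : v₁ ≠ [] := by rintro rfl; simp at hl
    have hv' : v = v₁ ++ s := by
      rw [List.append_assoc] at heq
      exact List.append_cancel_left heq
    exact lt_trans huv_lt_v (hvs v₁ s hv' hv₁ hsne)

/-! ### CFL existence -/

def lynIns : List α → List (List α) → List (List α)
  | a, [] => [a]
  | a, b :: M => if a < b then lynIns (a ++ b) M else a :: b :: M

local notation "R" => (fun x y : List α => y ≤ x)

instance : IsTrans (List α) (fun x y : List α => y ≤ x) :=
  ⟨fun _ _ _ h1 h2 => le_trans h2 h1⟩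

instance : IsAntisymm (List α) (fun x y : List α => y ≤ x) :=
  ⟨fun _ _ h1 h2 => le_antisymm h2 h1⟩

instance : IsTotal (List α) (fun x y : List α => y ≤ x) :=
  ⟨fun a b => (le_total b a)⟩

theorem lynIns_spec : ∀ (M : List (List α)) (a : List α), IsLyndon' a →
    (∀ l ∈ M, IsLyndon' l) → List.Chain' R M →
    (∀ l ∈ lynIns a M, IsLyndon' l) ∧ List.Chain' R (lynIns a M) ∧
      (lynIns a M).flatten = a ++ M.flatten := by
  intro M
  induction M with
  | nil =>
    intro a ha _ _
    refine ⟨?_, ?_, ?_⟩ <;> simp [lynIns, ha, List.Chain']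
  | cons b M ih =>
    intro a ha hM hc
    rw [lynIns]
    by_cases hab : a < b
    · rw [if_pos hab]
      have hb : IsLyndon' b := hM b (by simp)
      have hab' : IsLyndon' (a ++ b) := IsLyndon'.append ha hb hab
      obtain ⟨h1, h2, h3⟩ := ih (a ++ b) hab' (fun l hl => hM l (by simp [hl]))
        (hc.tail)
      exact ⟨h1, h2, by rw [h3]; simp⟩
    · rw [if_neg hab]
      refine ⟨?_, ?_, by simp⟩
      · intro l hl
        rcases List.mem_cons.mp hl with rfl | hl
        · exact ha
        · exact hM l hl
      · exact List.IsChain.cons_cons (le_of_not_gt hab) hc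

theorem isLyndon'_singleton (c : α) : IsLyndon' [c] := by
  refine ⟨by simp, ?_⟩
  intro p s heq hp hs
  exfalso
  have := congrArg List.length heq
  simp at this
  rcases List.length_pos_iff.mpr hp with h1
  rcases List.length_pos_iff.mpr hs with h2
  omega

def toCFL (w : List α) : List (List α) := w.foldr (fun c M => lynIns [c] M) []

theorem toCFL_spec (w : List α) :
    (∀ l ∈ toCFL w, IsLyndon' l) ∧ List.Chain' R (toCFL w) ∧ (toCFL w).flatten = w := by
  induction w with
  | nil => simp [toCFL, List.Chain']
  | cons c w ih =>
    obtain ⟨h1, h2, h3⟩ := ih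
    have := lynIns_spec (toCFL w) [c] (isLyndon'_singleton c) h1 h2
    refine ⟨this.1, this.2.1, ?_⟩
    show (lynIns [c] (toCFL w)).flatten = c :: w
    rw [this.2.2, h3]
    rfl

/-! ### CFL uniqueness -/

theorem exists_suffix_le : ∀ (M : List (List α)) (c : List α), (∀ m ∈ M, m ≤ c) →
    ∀ y, y ≠ [] → y <+: M.flatten → ∃ p, p ≠ [] ∧ p <:+ y ∧ p ≤ c := by
  intro M
  induction M with
  | nil =>
    intro c _ y hy hpre
    simp at hpre
    exact absurd hpre hy
  | cons m M ih =>
    intro c hle y hy hpre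
    simp only [List.flatten_cons] at hpre
    rcases le_or_gt y.length m.length with hl | hl
    · have hym : y <+: m := List.prefix_of_prefix_length_le hpre (m.prefix_append _) hl
      exact ⟨y, hy, List.suffix_refl y, le_trans (IsPrefix.le' hym) (hle m (by simp))⟩
    · have hmy : m <+: y := List.prefix_of_prefix_length_le (m.prefix_append _) hpre (le_of_lt hl)
      obtain ⟨y', rfl⟩ := hmy
      have hy' : y' ≠ [] := by rintro rfl; simp at hl
      have hy'pre : y' <+: M.flatten := by
        obtain ⟨t, ht⟩ := hpre
        rw [List.append_assoc] at ht
        exact ⟨t, List.append_cancel_left ht⟩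
      obtain ⟨p, hp1, hp2, hp3⟩ := ih c (fun x hx => hle x (by simp [hx])) y' hy' hy'pre
      exact ⟨p, hp1, hp2.trans (List.suffix_append m y'), hp3⟩

theorem cfl_head_eq {l m : List α} {L M : List (List α)}
    (hl : IsLyndon' l) (hm : IsLyndon' m)
    (hcM : List.Chain' R (m :: M))
    (heq : l ++ L.flatten = m ++ M.flatten) (hlen : m.length ≤ l.length) : l = m := by
  have hml : m <+: l := by
    refine List.prefix_of_prefix_length_le ⟨M.flatten, heq.symm⟩ ⟨L.flatten, rfl⟩ hlen
  rcases eq_or_ne l m with h | h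
  · exact h
  obtain ⟨y, rfl⟩ := hml
  have hy : y ≠ [] := by rintro rfl; simp at h
  exfalso
  have hyM : y <+: M.flatten := by
    rw [List.append_assoc] at heq
    have := List.append_cancel_left heq
    exact ⟨L.flatten, this⟩
  have hMle : ∀ x ∈ M, x ≤ m := by
    have hp := List.isChain_iff_pairwise.mp hcM
    exact (List.pairwise_cons.mp hp).1
  obtain ⟨p, hp1, hp2, hp3⟩ := exists_suffix_le M m hMle y hy hyM
  obtain ⟨y₁, rfl⟩ := hp2
  have hlp : m ++ (y₁ ++ p) < p := by
    refine hl.2 (m ++ y₁) p (by rw [List.append_assoc]) (by simp [hm.1]) hp1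
  have hmlt : m < m ++ (y₁ ++ p) := lt_append_of_ne_nil m (by simp [hp1])
  exact absurd (lt_of_lt_of_le hlp (le_trans hp3 (le_of_lt hmlt))) (lt_irrefl _)

theorem cfl_unique : ∀ (L M : List (List α)), (∀ l ∈ L, IsLyndon' l) → (∀ m ∈ M, IsLyndon' m) →
    List.Chain' R L → List.Chain' R M → L.flatten = M.flatten → L = M := by
  intro L
  induction L with
  | nil =>
    intro M _ hM _ _ hf
    cases M with
    | nil => rfl
    | cons m M =>
      exfalso
      simp at hf
      exact (hM m (by simp)).1 hf.1
  | cons l L ih =>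
    intro M hL hM hcL hcM hf
    cases M with
    | nil =>
      exfalso
      simp at hf
      exact (hL l (by simp)).1 hf.1
    | cons m M =>
      simp only [List.flatten_cons] at hf
      have hlm : l = m := by
        rcases le_total m.length l.length with h | h
        · exact cfl_head_eq (hL l (by simp)) (hM m (by simp)) hcM hf h
        · exact (cfl_head_eq (hM m (by simp)) (hL l (by simp)) hcL hf.symm h).symm
      subst hlm
      have htail : L.flatten = M.flatten := List.append_cancel_left hf
      have := ih M (fun x hx => hL x (by simp [hx])) (fun x hx => hM x (by simp [hx]))
        hcL.tail hcM.tail htail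
      rw [this]

/-! ### Counting -/


instance : IsTrans (List Bool) (fun a b : List Bool => b < a) :=
  ⟨fun _ _ _ h1 h2 => lt_trans h2 h1⟩

instance decR : DecidableRel (fun x y : List Bool => y ≤ x) :=
  fun x y => inferInstanceAs (Decidable (y ≤ x))

/-- weight of a multiset of words -/
def wt (M : Multiset (List Bool)) : ℕ := (M.map List.length).sum

theorem wt_add (A B : Multiset (List Bool)) : wt (A + B) = wt A + wt B := by
  simp [wt]

theorem wt_coe (L : List (List Bool)) : wt (↑L : Multiset (List Bool)) = (L.map List.length).sum := by
  simp [wt]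

def LynMul (n : ℕ) : Type := {M : Multiset (List Bool) // (∀ l ∈ M, IsLyndon l) ∧ wt M = n}

def LynFin (n : ℕ) : Type := {S : Finset (List Bool) // (∀ l ∈ S, IsLyndon l) ∧ wt S.val = n}

def GoodsN (n : ℕ) : Type := {w : List Bool // w.length = n ∧ HasStrictDecrLyndonDecomp w}

abbrev WordsN (n : ℕ) : Type := {w : List Bool // w.length = n}

/-- the sorted list of a multiset, decreasing -/
noncomputable def msort (M : Multiset (List Bool)) : List (List Bool) :=
  Multiset.sort M (fun x y : List Bool => y ≤ x)

theorem msort_sorted (M : Multiset (List Bool)) :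
    List.Pairwise (fun x y : List Bool => y ≤ x) (msort M) := Multiset.pairwise_sort M _

theorem msort_coe (M : Multiset (List Bool)) : ↑(msort M) = M := Multiset.sort_eq M _

/-- toCFL is the unique weakly decreasing Lyndon factorization -/
theorem toCFL_eq_of_decomp {w : List Bool} {L : List (List Bool)}
    (hL : ∀ l ∈ L, IsLyndon' l) (hc : List.Chain' (fun x y : List Bool => y ≤ x) L)
    (hf : L.flatten = w) : toCFL w = L := by
  obtain ⟨h1, h2, h3⟩ := toCFL_spec w
  exact cfl_unique (toCFL w) L h1 hL h2 hc (by rw [h3, hf])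

/-- E1 : WordsN n ≃ LynMul n -/
theorem e1_bij (n : ℕ) :
    Function.Bijective (fun w : WordsN n =>
      (⟨(↑(toCFL w.val) : Multiset (List Bool)),
        fun l hl => (isLyndon_iff_isLyndon' l).mpr ((toCFL_spec w.val).1 l (by
          rwa [Multiset.mem_coe] at hl)),
        by
          rw [wt_coe]
          rw [← List.length_flatten, (toCFL_spec w.val).2.2, w.2]⟩ : LynMul n)) := by
  constructor
  · rintro ⟨w1, h1⟩ ⟨w2, h2⟩ heq
    simp only [Subtype.mk.injEq] at heq
    have hperm := Multiset.coe_eq_coe.mp heq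
    have hs1 : List.Pairwise (fun x y : List Bool => y ≤ x) (toCFL w1) :=
      List.isChain_iff_pairwise.mp (toCFL_spec w1).2.1
    have hs2 : List.Pairwise (fun x y : List Bool => y ≤ x) (toCFL w2) :=
      List.isChain_iff_pairwise.mp (toCFL_spec w2).2.1
    have : toCFL w1 = toCFL w2 := List.Perm.eq_of_pairwise' hs1 hs2 hperm
    have hw : w1 = w2 := by
      rw [← (toCFL_spec w1).2.2, ← (toCFL_spec w2).2.2, this]
    exact Subtype.ext hw
  · rintro ⟨M, hlyn, hwt⟩
    set L := msort M with hL
    have hcoe : ↑L = M := msort_coe M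
    have hsorted := msort_sorted M
    have hLlyn : ∀ l ∈ L, IsLyndon' l := by
      intro l hl
      exact (isLyndon_iff_isLyndon' l).mp (hlyn l (by rw [← hcoe]; exact Multiset.mem_coe.mpr hl))
    have hchain : List.Chain' (fun x y : List Bool => y ≤ x) L :=
      List.isChain_iff_pairwise.mpr hsorted
    refine ⟨⟨L.flatten, ?_⟩, ?_⟩
    · rw [List.length_flatten, ← wt_coe, hcoe, hwt]
    · have : toCFL L.flatten = L := toCFL_eq_of_decomp hLlyn hchain rfl
      apply Subtype.ext
      simp only
      rw [this, hcoe]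

/-- strict decomposition: toCFL of a good word is strictly decreasing -/
theorem toCFL_of_good {w : List Bool} (hw : HasStrictDecrLyndonDecomp w) :
    List.Chain' (fun a b : List Bool => b < a) (toCFL w) := by
  obtain ⟨L, hflat, hlyn, hchain⟩ := hw
  have : toCFL w = L := by
    refine toCFL_eq_of_decomp ?_ ?_ hflat.symm
    · exact fun l hl => (isLyndon_iff_isLyndon' l).mp (hlyn l hl)
    · exact List.IsChain.imp (fun a b h => le_of_lt h) hchain
  rw [this]; exact hchain

theorem nodup_of_strict_chain {L : List (List Bool)}
    (h : List.Chain' (fun a b : List Bool => b < a) L) : L.Nodup := by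
  have hp := List.isChain_iff_pairwise.mp h
  exact hp.imp (fun h' => (ne_of_lt h').symm)

/-- E3 : GoodsN m ≃ LynFin m (bijection) -/
theorem e3_bij (m : ℕ) :
    Function.Bijective (fun w : GoodsN m =>
      (⟨⟨(↑(toCFL w.val) : Multiset (List Bool)),
          Multiset.coe_nodup.mpr (nodup_of_strict_chain (toCFL_of_good w.2.2))⟩,
        fun l hl => (isLyndon_iff_isLyndon' l).mpr ((toCFL_spec w.val).1 l (by
          simpa using hl)),
        by
          show wt (↑(toCFL w.val) : Multiset (List Bool)) = m
          rw [wt_coe, ← List.length_flatten, (toCFL_spec w.val).2.2, w.2.1]⟩ : LynFin m)) := by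
  constructor
  · rintro ⟨w1, h1⟩ ⟨w2, h2⟩ heq
    simp only [Subtype.mk.injEq, Finset.mk.injEq] at heq
    have hperm := Multiset.coe_eq_coe.mp heq
    have hs1 : List.Pairwise (fun x y : List Bool => y ≤ x) (toCFL w1) :=
      List.isChain_iff_pairwise.mp (toCFL_spec w1).2.1
    have hs2 : List.Pairwise (fun x y : List Bool => y ≤ x) (toCFL w2) :=
      List.isChain_iff_pairwise.mp (toCFL_spec w2).2.1
    have : toCFL w1 = toCFL w2 := List.Perm.eq_of_pairwise' hs1 hs2 hperm
    have hw : w1 = w2 := by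
      rw [← (toCFL_spec w1).2.2, ← (toCFL_spec w2).2.2, this]
    exact Subtype.ext hw
  · rintro ⟨S, hlyn, hwt⟩
    set L := msort S.val with hL
    have hcoe : ↑L = S.val := msort_coe S.val
    have hsorted := msort_sorted S.val
    have hnodupL : L.Nodup := by
      have := S.nodup
      rw [← hcoe] at this
      exact Multiset.coe_nodup.mp this
    have hmem : ∀ l ∈ L, l ∈ S := by
      intro l hl
      rw [← Finset.mem_coe, ← Finset.val_toFinset S]
      simp only [Finset.mem_coe, Multiset.mem_toFinset]
      rw [← hcoe]; exact Multiset.mem_coe.mpr hl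
    have hLlyn : ∀ l ∈ L, IsLyndon' l := by
      intro l hl
      exact (isLyndon_iff_isLyndon' l).mp (hlyn l (hmem l hl))
    have hstrict : List.Chain' (fun a b : List Bool => b < a) L := by
      apply List.isChain_iff_pairwise.mpr
      have h1 : List.Pairwise (fun x y : List Bool => y ≤ x) L := hsorted
      have h2 : List.Pairwise (fun x y : List Bool => x ≠ y) L := hnodupL
      exact (h1.and h2).imp (fun ⟨hle, hne⟩ => lt_of_le_of_ne hle hne.symm)
    have hchain : List.Chain' (fun x y : List Bool => y ≤ x) L :=
      List.isChain_iff_pairwise.mpr hsorted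
    refine ⟨⟨L.flatten, ?_, ⟨L, rfl, ?_, hstrict⟩⟩, ?_⟩
    · rw [List.length_flatten, ← wt_coe, hcoe, hwt]
    · exact fun l hl => (isLyndon_iff_isLyndon' l).mpr (hLlyn l hl)
    · have : toCFL L.flatten = L := toCFL_eq_of_decomp hLlyn hchain rfl
      apply Subtype.ext
      apply Finset.val_injective
      simp only
      rw [this, hcoe]

/-! ### parity decomposition -/

def Pairs (n : ℕ) : Type :=
  {p : Finset (List Bool) × Multiset (List Bool) //
    (∀ l ∈ p.1, IsLyndon l) ∧ (∀ l ∈ p.2, IsLyndon l) ∧ wt p.1.val + 2 * wt p.2 = n}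

theorem wt_nsmul (M : Multiset (List Bool)) : wt (2 • M) = 2 * wt M := by
  rw [two_nsmul, wt_add]; omega

theorem count_finset_val {S : Finset (List Bool)} (x : List Bool) :
    S.val.count x = if x ∈ S then 1 else 0 := by
  split_ifs with h
  · exact Multiset.count_eq_one_of_mem S.nodup h
  · exact Multiset.count_eq_zero_of_notMem h

def pairsMap (n : ℕ) (p : Pairs n) : LynMul n :=
  ⟨p.val.1.val + 2 • p.val.2, by
    obtain ⟨⟨S, M⟩, h1, h2, h3⟩ := p
    constructor
    · intro l hl
      rw [Multiset.mem_add] at hl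
      rcases hl with hl | hl
      · exact h1 l hl
      · rw [two_nsmul, Multiset.mem_add] at hl
        rcases hl with hl | hl <;> exact h2 l hl
    · rw [wt_add, wt_nsmul]; exact h3⟩

theorem pairsMap_bij (n : ℕ) : Function.Bijective (pairsMap n) := by
  constructor
  · rintro ⟨⟨S1, M1⟩, hp1⟩ ⟨⟨S2, M2⟩, hp2⟩ heq
    have heqv : S1.val + 2 • M1 = S2.val + 2 • M2 := congrArg Subtype.val heq
    have hcnt : ∀ x : List Bool, S1.val.count x + 2 * M1.count x
        = S2.val.count x + 2 * M2.count x := by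
      intro x
      have := congrArg (Multiset.count x) heqv
      simpa [Multiset.count_add, Multiset.count_nsmul] using this
    have hS : S1 = S2 := by
      ext x
      have h := hcnt x
      rw [count_finset_val, count_finset_val] at h
      constructor <;> intro hx <;> by_contra hc <;> simp [hx, hc] at h <;> omega
    have hM : M1 = M2 := by
      ext x
      have h := hcnt x
      rw [count_finset_val, count_finset_val] at h
      split_ifs at h <;> omega
    apply Subtype.ext
    simp [hS, hM]
  · rintro ⟨M, hlyn, hwt⟩
    classical
    set S : Finset (List Bool) := M.toFinset.filter (fun x => M.count x % 2 = 1) with hS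
    set M' : Multiset (List Bool) := ∑ x ∈ M.toFinset, Multiset.replicate (M.count x / 2) x
      with hM'
    have hcntS : ∀ x, S.val.count x = M.count x % 2 := by
      intro x
      rw [count_finset_val]
      split_ifs with h
      · rw [hS] at h
        simp only [Finset.mem_filter, Multiset.mem_toFinset] at h
        omega
      · rw [hS] at h
        simp only [Finset.mem_filter, Multiset.mem_toFinset] at h
        push_neg at h
        rcases Nat.eq_zero_or_pos (M.count x) with h0 | h0
        · omega
        · have hx : x ∈ M := Multiset.count_pos.mp h0
          have := h hx
          omega
    have hcntM' : ∀ x, M'.count x = M.count x / 2 := by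
      intro x
      rw [hM', Multiset.count_sum']
      by_cases hx : x ∈ M.toFinset
      · rw [Finset.sum_eq_single x
          (fun b _ hb => by rw [Multiset.count_replicate]; simp [hb])
          (fun h => absurd hx h)]
        simp [Multiset.count_replicate]
      · have hc0 : M.count x = 0 :=
          Multiset.count_eq_zero.mpr (fun h => hx (Multiset.mem_toFinset.mpr h))
        rw [hc0]
        simp only [Nat.zero_div]
        apply Finset.sum_eq_zero
        intro b hb
        rw [Multiset.count_replicate]
        split_ifs with h
        · subst h; exact absurd hb hx
        · rfl
    have hadd : S.val + 2 • M' = M := by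
      ext x
      rw [Multiset.count_add, Multiset.count_nsmul, hcntS, hcntM']
      omega
    have hmemS : ∀ l ∈ S, l ∈ M := by
      intro l hl
      rw [hS] at hl
      simp only [Finset.mem_filter, Multiset.mem_toFinset] at hl
      exact hl.1
    have hmemM' : ∀ l ∈ M', l ∈ M := by
      intro l hl
      have := Multiset.count_pos.mpr hl
      rw [hcntM'] at this
      exact Multiset.count_pos.mp (by omega)
    refine ⟨⟨⟨S, M'⟩, fun l hl => hlyn l (hmemS l hl), fun l hl => hlyn l (hmemM' l hl), ?_⟩, ?_⟩
    · have := congrArg wt hadd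
      rw [wt_add, wt_nsmul] at this
      rw [this, hwt]
    · apply Subtype.ext
      exact hadd

/-! ### finiteness and cardinalities -/

instance wordsN_finite (n : ℕ) : Finite (WordsN n) :=
  inferInstanceAs (Finite (List.Vector Bool n))

theorem card_wordsN (n : ℕ) : Nat.card (WordsN n) = 2 ^ n := by
  have : Nat.card (List.Vector Bool n) = 2 ^ n := by
    rw [Nat.card_eq_fintype_card, card_vector]
    simp
  exact this

noncomputable def e1Equiv (n : ℕ) : WordsN n ≃ LynMul n := Equiv.ofBijective _ (e1_bij n)

noncomputable def e3Equiv (m : ℕ) : GoodsN m ≃ LynFin m := Equiv.ofBijective _ (e3_bij m)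

noncomputable def pairsEquiv (n : ℕ) : Pairs n ≃ LynMul n := Equiv.ofBijective _ (pairsMap_bij n)

instance lynMul_finite (n : ℕ) : Finite (LynMul n) := Finite.of_equiv _ (e1Equiv n)

instance goodsN_finite (m : ℕ) : Finite (GoodsN m) := by
  apply Finite.of_injective (fun w : GoodsN m => (⟨w.val, w.2.1⟩ : WordsN m))
  rintro ⟨w1, h1⟩ ⟨w2, h2⟩ h
  simp only [Subtype.mk.injEq] at h
  exact Subtype.ext h

instance lynFin_finite (m : ℕ) : Finite (LynFin m) := Finite.of_equiv _ (e3Equiv m)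

instance pairs_finite (n : ℕ) : Finite (Pairs n) := Finite.of_equiv _ (pairsEquiv n).symm

theorem card_lynMul (n : ℕ) : Nat.card (LynMul n) = 2 ^ n := by
  rw [← Nat.card_congr (e1Equiv n), card_wordsN]

theorem card_lynFin (m : ℕ) : Nat.card (LynFin m) = Nat.card (GoodsN m) :=
  (Nat.card_congr (e3Equiv m)).symm

/-- the fiber map -/
def fib (n : ℕ) (p : Pairs n) : Fin (n / 2 + 1) :=
  ⟨wt p.val.2, by have := p.2.2.2; omega⟩

def fiberEquiv (n : ℕ) (j : Fin (n / 2 + 1)) :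
    {p : Pairs n // fib n p = j} ≃ (LynFin (n - 2 * j.val) × LynMul j.val) where
  toFun q :=
    ⟨⟨q.val.val.1, q.val.2.1, by
        have h1 := q.val.2.2.2
        have h2 : wt q.val.val.2 = j.val := congrArg Fin.val q.2
        omega⟩,
     ⟨q.val.val.2, q.val.2.2.1, congrArg Fin.val q.2⟩⟩
  invFun x :=
    ⟨⟨⟨x.1.val, x.2.val⟩, x.1.2.1, x.2.2.1, by
        have h1 := x.1.2.2
        have h2 := x.2.2.2
        have h3 : (j : ℕ) < n / 2 + 1 := j.isLt
        simp only at h1 h2 ⊢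
        omega⟩,
     by
        apply Fin.ext
        exact x.2.2.2⟩
  left_inv q := by
    apply Subtype.ext
    apply Subtype.ext
    rfl
  right_inv x := by
    apply Prod.ext
    · apply Subtype.ext; rfl
    · apply Subtype.ext; rfl

theorem nat_card_sigma {k : ℕ} (β : Fin k → Type) [∀ i, Finite (β i)] :
    Nat.card (Σ i, β i) = ∑ i, Nat.card (β i) := by
  letI : ∀ i, Fintype (β i) := fun i => Fintype.ofFinite _
  rw [Nat.card_eq_fintype_card, Fintype.card_sigma]
  exact Finset.sum_congr rfl (fun i _ => (Nat.card_eq_fintype_card).symm)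

theorem master_identity (n : ℕ) :
    2 ^ n = ∑ j ∈ Finset.range (n / 2 + 1), Nat.card (GoodsN (n - 2 * j)) * 2 ^ j := by
  have h1 : (2 : ℕ) ^ n = Nat.card (Pairs n) := by
    rw [Nat.card_congr (pairsEquiv n), card_lynMul]
  have h2 : Nat.card (Pairs n) = Nat.card (Σ j : Fin (n / 2 + 1), {p : Pairs n // fib n p = j}) :=
    (Nat.card_congr (Equiv.sigmaFiberEquiv (fib n))).symm
  have h3 : ∀ j : Fin (n / 2 + 1), Nat.card {p : Pairs n // fib n p = j}
      = Nat.card (GoodsN (n - 2 * j.val)) * 2 ^ j.val := by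
    intro j
    rw [Nat.card_congr (fiberEquiv n j), Nat.card_prod, card_lynFin, card_lynMul]
  rw [h1, h2, nat_card_sigma]
  have h4 : ∑ j : Fin (n / 2 + 1), Nat.card {p : Pairs n // fib n p = j}
      = ∑ j : Fin (n / 2 + 1), (fun m : ℕ => Nat.card (GoodsN (n - 2 * m)) * 2 ^ m) j.val :=
    Finset.sum_congr rfl fun j _ => h3 j
  rw [h4]
  exact Fin.sum_univ_eq_sum_range (fun m : ℕ => Nat.card (GoodsN (n - 2 * m)) * 2 ^ m) (n / 2 + 1)

/-- The number of binary words of length `n ≥ 2` whose Chen–Fox–Lyndon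
decomposition is strictly decreasing equals `2^(n-1)`. -/
theorem card_strictDecr_binary (n : ℕ) (hn : 2 ≤ n) :
    Nat.card {w : List Bool // w.length = n ∧ HasStrictDecrLyndonDecomp w}
      = 2 ^ (n - 1) := by
  have hid := master_identity n
  have hid2 := master_identity (n - 2)
  have hsplit : n / 2 + 1 = (n / 2) + 1 := rfl
  rw [Finset.sum_range_succ'] at hid
  -- hid : 2^n = (∑ j in range (n/2), G (n - 2*(j+1)) * 2^(j+1)) + G (n - 0) * 2^0
  have hrange : n / 2 = (n - 2) / 2 + 1 := by omega
  have hsum : ∑ j ∈ Finset.range (n / 2), Nat.card (GoodsN (n - 2 * (j + 1))) * 2 ^ (j + 1)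
      = 2 * ∑ j ∈ Finset.range ((n - 2) / 2 + 1), Nat.card (GoodsN ((n - 2) - 2 * j)) * 2 ^ j := by
    rw [hrange, Finset.mul_sum]
    refine Finset.sum_congr rfl (fun j hj => ?_)
    have h1 : n - 2 * (j + 1) = (n - 2) - 2 * j := by omega
    rw [h1, pow_succ]
    ring
  rw [hsum, ← hid2] at hid
  have hG : Nat.card (GoodsN (n - 2 * 0)) = Nat.card (GoodsN n) := by norm_num
  have h1 : n - 1 + 1 = n := by omega
  have h2 : n - 2 + 1 = n - 1 := by omega
  have hpow : (2 : ℕ) ^ n = 2 ^ (n - 1) * 2 := by rw [← pow_succ, h1]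
  have hpow2 : (2 : ℕ) ^ (n - 1) = 2 ^ (n - 2) * 2 := by rw [← pow_succ, h2]
  have : Nat.card (GoodsN n) = 2 ^ (n - 1) := by
    simp only [Nat.mul_zero, Nat.sub_zero, pow_zero, mul_one] at hid
    omega
  exact this
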